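/- arXiv:0706.0319 — 3 statements merged into one kernel-verified Lean document; each statement's English description precedes it below -/
import Mathlib

section
/- Let T ⊆ 2^{<ω} be a Sacks condition (perfect tree) and let A_1, A_2, A_3, … be countably many maximal antichains of T. Then there is a Sacks condition T' ⊆ T such that for every i, the set A_i ∩ T' is a front of T'. -/
/-- `T ⊆ ω^{<ω}` is a tree: closed under initial segments. -/
def IsTreeN (T : Set (List ℕ)) : Prop := ∀ s ∈ T, ∀ t : List ℕ, t <+: s → t ∈ T

/-- Two nodes are comparable (compatible) if one extends the other. -/
def NodeCompat (s t : List ℕ) : Prop := s <+: t ∨ t <+: s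

/-- A splitting node of `T`: a node with at least two immediate successors in `T`. -/
def IsSplitNode (T : Set (List ℕ)) (s : List ℕ) : Prop :=
  s ∈ T ∧ ∃ i j : ℕ, i ≠ j ∧ s ++ [i] ∈ T ∧ s ++ [j] ∈ T

/-- A branch of `T`: a maximal chain in `T`. -/
def IsBranch (T : Set (List ℕ)) (b : Set (List ℕ)) : Prop :=
  b ⊆ T ∧ b.Pairwise NodeCompat ∧
    ∀ b' : Set (List ℕ), b ⊆ b' → b' ⊆ T → b'.Pairwise NodeCompat → b' = b

/-- A front of `T`: pairwise incomparable nodes of `T` met by every branch. -/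
def IsFront (T : Set (List ℕ)) (A : Set (List ℕ)) : Prop :=
  A ⊆ T ∧ (A.Pairwise fun s t => ¬ NodeCompat s t) ∧
    ∀ b : Set (List ℕ), IsBranch T b → ∃ a ∈ A, a ∈ b

/-- A Sacks condition: a nonempty binary tree without leaves such that above
every node there is a splitting node. -/
def IsSacks (T : Set (List ℕ)) : Prop :=
  IsTreeN T ∧ T.Nonempty ∧ (∀ s ∈ T, ∀ k ∈ s, k < 2) ∧
    (∀ s ∈ T, ∃ k : ℕ, s ++ [k] ∈ T) ∧
    (∀ s ∈ T, ∃ t : List ℕ, s <+: t ∧ IsSplitNode T t)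


/-
Fusion argument. Recursively pick splitting nodes `g s ∈ T`, indexed by binary sequences `s`,
so that `g (s⌢ε)` is a splitting node above `(g s)⌢ε` extending a member of `A_{|s|}`; this is
possible because `A_{|s|}` is a maximal antichain. The nodes below some `g s` form a perfect
subtree `T'`, and every branch of `T'` passes through some `g (s⌢ε)` with `|s| = i`, hence
through a member of `A_i`.
-/

theorem List.exists_fork_of_not_prefix {α : Type*} :
    ∀ (s u : List α), ¬ s <+: u → ¬ u <+: s →
      ∃ r x y, x ≠ y ∧ r ++ [x] <+: s ∧ r ++ [y] <+: u
  | [], _, h, _ => absurd List.nil_prefix h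
  | _ :: _, [], _, h => absurd List.nil_prefix h
  | a :: s, b :: u, hsu, hus => by
    by_cases hab : a = b
    · subst hab
      obtain ⟨r, x, y, hxy, hs, hu⟩ := exists_fork_of_not_prefix s u
        (fun h => hsu (List.cons_prefix_cons.2 ⟨rfl, h⟩))
        (fun h => hus (List.cons_prefix_cons.2 ⟨rfl, h⟩))
      exact ⟨a :: r, x, y, hxy, List.cons_prefix_cons.2 ⟨rfl, hs⟩,
        List.cons_prefix_cons.2 ⟨rfl, hu⟩⟩
    · exact ⟨[], a, b, hab, List.cons_prefix_cons.2 ⟨rfl, List.nil_prefix⟩,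
        List.cons_prefix_cons.2 ⟨rfl, List.nil_prefix⟩⟩

theorem List.exists_fork_of_not_suffix {α : Type*} {s u : List α}
    (hsu : ¬ s <:+ u) (hus : ¬ u <:+ s) :
    ∃ r x y, x ≠ y ∧ x :: r <:+ s ∧ y :: r <:+ u := by
  obtain ⟨r, x, y, hxy, hs, hu⟩ := List.exists_fork_of_not_prefix s.reverse u.reverse
    (mt List.reverse_prefix.1 hsu) (mt List.reverse_prefix.1 hus)
  exact ⟨r.reverse, x, y, hxy, List.reverse_prefix.1 (by simpa using hs),
    List.reverse_prefix.1 (by simpa using hu)⟩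

theorem List.exists_append_singleton_prefix {α : Type*} {t w : List α} (h : t <+: w)
    (hlt : t.length < w.length) : ∃ k, t ++ [k] <+: w := by
  obtain ⟨_ | ⟨c, d⟩, rfl⟩ := h
  · simp at hlt
  · exact ⟨c, d, by simp⟩

theorem List.exists_cons_suffix_of_suffix {α : Type*} {s u : List α} (h : s <:+ u)
    (hne : s ≠ u) : ∃ ε, ε :: s <:+ u := by
  obtain ⟨w, rfl⟩ := h
  rcases List.eq_nil_or_concat w with rfl | ⟨L, ε, rfl⟩
  · simp at hne
  · exact ⟨ε, L, by simp⟩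

theorem nodeCompat_of_prefix_of_prefix {p q w : List ℕ} (hp : p <+: w) (hq : q <+: w) :
    NodeCompat p q :=
  List.prefix_or_prefix_of_prefix hp hq

theorem not_nodeCompat_of_fork {r p q : List ℕ} {x y : ℕ} (hxy : x ≠ y)
    (hp : r ++ [x] <+: p) (hq : r ++ [y] <+: q) : ¬ NodeCompat p q := by
  have fork : ∀ w, r ++ [x] <+: w → r ++ [y] <+: w → False := fun w hx hy =>
    hxy (by simpa using (List.prefix_of_prefix_length_le hx hy (by simp)).eq_of_length (by simp))
  rintro (h | h)
  · exact fork q (hp.trans h) hq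
  · exact fork p hp (hq.trans h)

namespace IsBranch

variable {T b : Set (List ℕ)}

theorem mem_of_forall_nodeCompat (hb : IsBranch T b) {w : List ℕ} (hw : w ∈ T)
    (hcompat : ∀ u ∈ b, NodeCompat u w) : w ∈ b := by
  have hins := hb.2.2 (insert w b) (Set.subset_insert _ _) (Set.insert_subset hw hb.1)
    (Set.pairwise_insert.2 ⟨hb.2.1, fun u hu _ => ⟨(hcompat u hu).symm, hcompat u hu⟩⟩)
  exact hins ▸ Set.mem_insert w b

theorem prefix_of_length_le (hb : IsBranch T b) {u v : List ℕ} (hu : u ∈ b) (hv : v ∈ b)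
    (hlen : u.length ≤ v.length) : u <+: v := by
  by_cases huv : u = v
  · exact huv ▸ List.prefix_rfl
  · rcases hb.2.1 hu hv huv with h | h
    · exact h
    · exact (h.eq_of_length (le_antisymm h.length_le hlen)).symm ▸ List.prefix_rfl

theorem prefix_mem (hT : IsTreeN T) (hb : IsBranch T b) {s t : List ℕ} (ht : t ∈ b)
    (hst : s <+: t) : s ∈ b := by
  refine hb.mem_of_forall_nodeCompat (hT t (hb.1 ht) s hst) fun u hu => ?_
  rcases le_total u.length t.length with h | h
  · exact nodeCompat_of_prefix_of_prefix (hb.prefix_of_length_le hu ht h) hst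
  · exact Or.inr (hst.trans (hb.prefix_of_length_le ht hu h))

theorem exists_mem_length_eq (hT : IsTreeN T) (hne : T.Nonempty)
    (hleaf : ∀ s ∈ T, ∃ k, s ++ [k] ∈ T) (hb : IsBranch T b) (n : ℕ) :
    ∃ p ∈ b, p.length = n := by
  induction n with
  | zero =>
    obtain ⟨s, hs⟩ := hne
    exact ⟨[], hb.mem_of_forall_nodeCompat (hT s hs [] List.nil_prefix)
      fun u _ => Or.inr List.nil_prefix, rfl⟩
  | succ n ih =>
    obtain ⟨p, hp, rfl⟩ := ih
    by_cases hlong : ∃ q ∈ b, p.length < q.length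
    · obtain ⟨q, hq, hlt⟩ := hlong
      exact ⟨q.take (p.length + 1), hb.prefix_mem hT hq (List.take_prefix _ _),
        by simp; omega⟩
    · push Not at hlong
      obtain ⟨k, hk⟩ := hleaf p (hb.1 hp)
      -- every node of `b` lies below `p`, so `b` may be extended by any child of `p`
      refine ⟨p ++ [k], hb.mem_of_forall_nodeCompat hk fun u hu => Or.inl ?_, by simp⟩
      exact (hb.prefix_of_length_le hu hp (hlong u hu)).trans (List.prefix_append _ _)

end IsBranch

/-- The splitting nodes of the subtree are indexed by binary sequences written newest bit
first, so that `ε :: s` is the `ε`-successor of `s`. -/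
def IsFusionMap (g : List Bool → List ℕ) : Prop :=
  ∀ ε s, g s ++ [ε.toNat] <+: g (ε :: s)

def fusionTree (g : List Bool → List ℕ) : Set (List ℕ) := {t | ∃ s, t <+: g s}

theorem isTreeN_fusionTree (g : List Bool → List ℕ) : IsTreeN (fusionTree g) :=
  fun _ ⟨u, hu⟩ _ ht => ⟨u, ht.trans hu⟩

theorem mem_fusionTree (g : List Bool → List ℕ) (s : List Bool) : g s ∈ fusionTree g :=
  ⟨s, List.prefix_rfl⟩

namespace IsFusionMap

variable {g : List Bool → List ℕ}

theorem prefix_cons (hg : IsFusionMap g) (ε : Bool) (s : List Bool) : g s <+: g (ε :: s) :=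
  (List.prefix_append _ _).trans (hg ε s)

theorem length_lt_cons (hg : IsFusionMap g) (ε : Bool) (s : List Bool) :
    (g s).length < (g (ε :: s)).length := by
  have h := (hg ε s).length_le
  simp only [List.length_append, List.length_singleton] at h
  omega

theorem prefix_of_suffix (hg : IsFusionMap g) {s u : List Bool} (h : s <:+ u) :
    g s <+: g u := by
  induction u with
  | nil => rw [List.suffix_nil.1 h]
  | cons ε u ih =>
    rcases List.suffix_cons_iff.1 h with rfl | h
    · exact List.prefix_rfl
    · exact (ih h).trans (hg.prefix_cons ε u)

theorem not_nodeCompat (hg : IsFusionMap g) {s u : List Bool} (hsu : ¬ s <:+ u)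
    (hus : ¬ u <:+ s) : ¬ NodeCompat (g s) (g u) := by
  obtain ⟨r, x, y, hxy, hx, hy⟩ := List.exists_fork_of_not_suffix hsu hus
  refine not_nodeCompat_of_fork (r := g r) (x := x.toNat) (y := y.toNat) ?_
    ((hg x r).trans (hg.prefix_of_suffix hx)) ((hg y r).trans (hg.prefix_of_suffix hy))
  cases x <;> cases y <;> simp_all

theorem exists_cons_suffix_of_prefix (hg : IsFusionMap g) {s u : List Bool}
    (h : g s <+: g u) (hne : g s ≠ g u) : ∃ ε, ε :: s <:+ u := by
  have hsu : s <:+ u := by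
    by_contra hsu
    by_cases hus : u <:+ s
    · exact hne (h.eq_of_length (le_antisymm h.length_le (hg.prefix_of_suffix hus).length_le))
    · exact hg.not_nodeCompat hsu hus (Or.inl h)
  exact List.exists_cons_suffix_of_suffix hsu (by rintro rfl; exact hne rfl)

theorem exists_append_mem_fusionTree (hg : IsFusionMap g) {t : List ℕ}
    (ht : t ∈ fusionTree g) : ∃ k, t ++ [k] ∈ fusionTree g := by
  obtain ⟨s, hs⟩ := ht
  obtain ⟨k, hk⟩ := List.exists_append_singleton_prefix (hs.trans (hg.prefix_cons true s))
    (hs.length_le.trans_lt (hg.length_lt_cons true s))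
  exact ⟨k, true :: s, hk⟩

theorem isSacks_fusionTree (hg : IsFusionMap g)
    (hbin : ∀ t ∈ fusionTree g, ∀ k ∈ t, k < 2) :
    IsSacks (fusionTree g) :=
  ⟨isTreeN_fusionTree g, ⟨g [], mem_fusionTree g []⟩, hbin,
    fun _ => hg.exists_append_mem_fusionTree,
    fun _ ⟨s, hs⟩ => ⟨g s, hs, mem_fusionTree g s, 0, 1, zero_ne_one,
      ⟨false :: s, hg false s⟩, ⟨true :: s, hg true s⟩⟩⟩

variable {b : Set (List ℕ)}

theorem exists_cons_mem_branch (hg : IsFusionMap g) (hb : IsBranch (fusionTree g) b)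
    {s : List Bool} (hs : g s ∈ b) : ∃ ε, g (ε :: s) ∈ b := by
  obtain ⟨p, hp, hplen⟩ := hb.exists_mem_length_eq (isTreeN_fusionTree g)
    ⟨g [], mem_fusionTree g []⟩ (fun _ => hg.exists_append_mem_fusionTree)
    (max (g (false :: s)).length (g (true :: s)).length)
  have hlen : ∀ ε, (g (ε :: s)).length ≤ p.length := by
    intro ε; cases ε <;> omega
  obtain ⟨u, hpu⟩ := hb.1 hp
  have hlt : (g s).length < p.length := (hg.length_lt_cons true s).trans_le (hlen true)
  obtain ⟨ε, hεu⟩ :=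
    hg.exists_cons_suffix_of_prefix ((hb.prefix_of_length_le hs hp hlt.le).trans hpu)
    fun h => (hlt.trans_le hpu.length_le).ne (congrArg List.length h)
  exact ⟨ε, hb.prefix_mem (isTreeN_fusionTree g) hp
    (List.prefix_of_prefix_length_le (hg.prefix_of_suffix hεu) hpu (hlen ε))⟩

theorem exists_mem_branch (hg : IsFusionMap g) (hb : IsBranch (fusionTree g) b) (n : ℕ) :
    ∃ s : List Bool, s.length = n ∧ g s ∈ b := by
  induction n with
  | zero =>
    refine ⟨[], rfl, hb.mem_of_forall_nodeCompat (mem_fusionTree g []) fun u hu => ?_⟩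
    obtain ⟨s, hs⟩ := hb.1 hu
    exact nodeCompat_of_prefix_of_prefix hs (hg.prefix_of_suffix List.nil_suffix)
  | succ n ih =>
    obtain ⟨s, rfl, hs⟩ := ih
    obtain ⟨ε, hε⟩ := hg.exists_cons_mem_branch hb hs
    exact ⟨ε :: s, rfl, hε⟩

theorem isFront_inter_fusionTree (hg : IsFusionMap g) {A : Set (List ℕ)}
    (hA : A.Pairwise fun s t => ¬ NodeCompat s t) (n : ℕ)
    (hhit : ∀ ε s, s.length = n → ∃ a ∈ A, a <+: g (ε :: s)) :
    IsFront (fusionTree g) (A ∩ fusionTree g) := by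
  refine ⟨Set.inter_subset_right, hA.mono Set.inter_subset_left, fun b hb => ?_⟩
  obtain ⟨_ | ⟨ε, s⟩, hlen, hs⟩ := hg.exists_mem_branch hb (n + 1)
  · simp at hlen
  obtain ⟨a, ha, has⟩ := hhit ε s (by simpa using hlen)
  exact ⟨a, ⟨ha, isTreeN_fusionTree g _ (mem_fusionTree g _) a has⟩,
    hb.prefix_mem (isTreeN_fusionTree g) hs has⟩

end IsFusionMap

theorem IsSplitNode.append_toNat_mem {T : Set (List ℕ)} (hbin : ∀ s ∈ T, ∀ k ∈ s, k < 2)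
    {t : List ℕ} (ht : IsSplitNode T t) (ε : Bool) : t ++ [ε.toNat] ∈ T := by
  obtain ⟨-, i, j, hij, hi, hj⟩ := ht
  have hi2 := hbin _ hi i (by simp)
  have hj2 := hbin _ hj j (by simp)
  interval_cases i <;> interval_cases j <;> cases ε <;> simp_all

theorem IsSacks.exists_splitNode_above_mem {T A : Set (List ℕ)} (hT : IsSacks T) (hAT : A ⊆ T)
    (hmax : ∀ s ∈ T, ∃ a ∈ A, NodeCompat s a) {t : List ℕ} (ht : t ∈ T) :
    ∃ t', t <+: t' ∧ IsSplitNode T t' ∧ ∃ a ∈ A, a <+: t' := by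
  obtain ⟨a, ha, hta⟩ := hmax t ht
  obtain ⟨u, huT, htu, hau⟩ : ∃ u ∈ T, t <+: u ∧ a <+: u := by
    rcases hta with h | h
    · exact ⟨a, hAT ha, h, List.prefix_rfl⟩
    · exact ⟨t, ht, List.prefix_rfl, h⟩
  obtain ⟨t', hut', ht'⟩ := hT.2.2.2.2 u huT
  exact ⟨t', htu.trans hut', ht', a, ha, hau.trans hut'⟩

theorem IsSacks.exists_fusionMap {T : Set (List ℕ)} {A : ℕ → Set (List ℕ)} (hT : IsSacks T)
    (hAT : ∀ i, A i ⊆ T) (hmax : ∀ i, ∀ s ∈ T, ∃ a ∈ A i, NodeCompat s a) :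
    ∃ g, IsFusionMap g ∧ (∀ s, g s ∈ T) ∧
      ∀ ε s, ∃ a ∈ A s.length, a <+: g (ε :: s) := by
  have hstep : ∀ (ε : Bool) (i : ℕ) (t : {t // IsSplitNode T t}),
      ∃ t' : {t // IsSplitNode T t},
        t.1 ++ [ε.toNat] <+: t'.1 ∧ ∃ a ∈ A i, a <+: t'.1 := by
    rintro ε i ⟨t, ht⟩
    obtain ⟨t', htt', ht', hA⟩ :=
      hT.exists_splitNode_above_mem (hAT i) (hmax i) (ht.append_toNat_mem hT.2.2.1 ε)
    exact ⟨⟨t', ht'⟩, htt', hA⟩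
  choose next hnext using hstep
  obtain ⟨root, -, hroot⟩ := hT.2.2.2.2 _ hT.2.1.some_mem
  let G : List Bool → {t // IsSplitNode T t} :=
    fun s => s.rec ⟨root, hroot⟩ fun ε s t => next ε s.length t
  exact ⟨fun s => (G s).1, fun ε s => (hnext ε s.length (G s)).1, fun s => (G s).2.1,
    fun ε s => (hnext ε s.length (G s)).2⟩

/-- Given a Sacks condition `T` and countably many maximal antichains `A i` of `T`,
there is a Sacks condition `T' ⊆ T` such that each `A i ∩ T'` is a front of `T'`. -/
theorem stmt3 (T : Set (List ℕ)) (hT : IsSacks T) (A : ℕ → Set (List ℕ))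
    (hA : ∀ i : ℕ, A i ⊆ T ∧ ((A i).Pairwise fun s t => ¬ NodeCompat s t) ∧
      ∀ s ∈ T, ∃ a ∈ A i, NodeCompat s a) :
    ∃ T' : Set (List ℕ), T' ⊆ T ∧ IsSacks T' ∧
      ∀ i : ℕ, IsFront T' (A i ∩ T') := by
  obtain ⟨g, hg, hgT, hhit⟩ :=
    hT.exists_fusionMap (fun i => (hA i).1) (fun i => (hA i).2.2)
  have hsub : fusionTree g ⊆ T := fun t ⟨s, hts⟩ => hT.1 _ (hgT s) t hts
  refine ⟨fusionTree g, hsub, hg.isSacks_fusionTree fun t ht => hT.2.2.1 t (hsub ht),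
    fun i => hg.isFront_inter_fusionTree (hA i).2.1 i fun ε s hs => ?_⟩
  exact hs ▸ hhit ε s
end

section
/- For every condition p ∈ P, every ε ∈ μ, every α ∈ dom(p) ∩ I_ε, every l ∈ ω, and every s ∈ p(ε), there is s' ⊇ s in p(ε) such that every branch of the s'-tree p(α,s') contains at least l many l-large splitting nodes. -/
/-- The stem of a tree: its first (minimal) splitting node. -/
def IsStem (T : Set (List ℕ)) (s : List ℕ) : Prop :=
  IsSplitNode T s ∧ ∀ t : List ℕ, IsSplitNode T t → t <+: s → t = s

/-- The parameters `f_{n,l}` (`−1 ≤ l < 2^n`, encoded with the shift `f n (l+1) = f_{n,l}`,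
so `f n 0 = f_{n,−1}`) and `g_{n,l}` (`0 ≤ l < 2^n`), with the growth conditions
`g_{n,l} > 2·(f_{n,l−1})^{n·fmax(n−1)^n}` and `f_{n,l} > (g_{n,l})^{n+1}`,
where `fmax m = f_{m,2^m−1}`. -/
structure GrowthPair where
  g : ℕ → ℕ → ℕ
  f : ℕ → ℕ → ℕ
  f_zero : f 0 0 = 0
  f_succ : ∀ n : ℕ, f (n + 1) 0 = f n (2 ^ n)
  g_big : ∀ n l : ℕ, l < 2 ^ n → g n l > 2 * f n l ^ (n * f (n - 1) (2 ^ (n - 1)) ^ n)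
  f_big : ∀ n l : ℕ, l < 2 ^ n → f n (l + 1) > g n l ^ (n + 1)

/-- The lexicographic rank of a binary sequence `s ∈ 2^n` in `[0, 2^n)`. -/
def lexRank (s : List ℕ) : ℕ := s.foldl (fun a b => 2 * a + b) 0

/-- `f_s` for `s ∈ 2^n`. -/
def GrowthPair.fOf (G : GrowthPair) (s : List ℕ) : ℕ := G.f s.length (lexRank s + 1)

/-- `g_s` for `s ∈ 2^n`. -/
def GrowthPair.gOf (G : GrowthPair) (s : List ℕ) : ℕ := G.g s.length (lexRank s)

/-- The set of immediate successors of `t` in `T`. -/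
def succSet (T : Set (List ℕ)) (t : List ℕ) : Set ℕ := {k | t ++ [k] ∈ T}

/-- The norm `μ_{s↾m}(A)` of the set `A` of immediate `T`-successors of a node `t` of
height `m`, i.e. `log_{g_{s↾m}} |A|`. -/
noncomputable def splitNorm (G : GrowthPair) (s t : List ℕ) (T : Set (List ℕ)) : ℝ :=
  Real.logb (G.gOf (s.take t.length)) ((succSet T t).ncard)

/-- `t` is an `l`-large splitting node of the `s`-tree `T`. -/
def IsLargeSplit (G : GrowthPair) (s : List ℕ) (T : Set (List ℕ)) (l : ℕ) (t : List ℕ) : Prop :=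
  t ∈ T ∧ (l : ℝ) ≤ splitNorm G s t T

/-- The `s`-tree `T` has `l`-large splitting: its `l`-large splitting nodes form a front. -/
def HasLargeSplitting (G : GrowthPair) (s : List ℕ) (T : Set (List ℕ)) (l : ℕ) : Prop :=
  IsFront T {t : List ℕ | IsLargeSplit G s T l t}

/-- An `s`-tree for `s ∈ 2^n`: a (nonempty) tree `T ⊆ ω^{≤n+1}` all of whose branches have
length `n+1`, with `t(m) < f_{s↾m}` for all `m ≤ n` and `t ∈ T ∩ ω^{m+1}`. -/
def IsSTree (G : GrowthPair) (s : List ℕ) (T : Set (List ℕ)) : Prop :=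
  IsTreeN T ∧ T.Nonempty ∧
    (∀ t ∈ T, t.length ≤ s.length + 1) ∧
    (∀ t ∈ T, t.length ≤ s.length → ∃ k : ℕ, t ++ [k] ∈ T) ∧
    (∀ t ∈ T, ∀ (m : ℕ) (hm : m < t.length), t.get ⟨m, hm⟩ < G.fOf (s.take m))

/-- The index set `I = μ ∪ ⋃_{ε<μ} I_ε`, abstractly: an ambient type `ι` (playing the
role of `I`), the subset `Root` (playing the role of `μ`), and the map `ε(·) = idx`
(so that `I_ε = {α ∉ Root | idx α = ε}`). -/
structure IdxCtx (ι : Type) where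
  Root : Set ι
  idx : ι → ι
  idx_mem : ∀ α : ι, idx α ∈ Root
  idx_root : ∀ ε ∈ Root, idx ε = ε

/-- The set `I_ε`. -/
def IdxCtx.block {ι : Type} (C : IdxCtx ι) (ε : ι) : Set ι :=
  {α : ι | α ∉ C.Root ∧ C.idx α = ε}

/-- (Raw data of) a condition: a domain, a Sacks condition `sacks ε` for `ε ∈ dom ∩ Root`,
and an `s`-tree `tr α s` for `α ∈ dom ∖ Root` and `s ∈ sacks (idx α)`; all components are
normalized to `∅` outside their intended domain. -/
structure Cond (ι : Type) where
  dom : Set ι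
  sacks : ι → Set (List ℕ)
  tr : ι → List ℕ → Set (List ℕ)

/-- Membership in the forcing poset `P`. -/
def InP {ι : Type} (G : GrowthPair) (C : IdxCtx ι) (p : Cond ι) : Prop :=
  p.dom.Countable ∧
  (∀ α ∈ p.dom, C.idx α ∈ p.dom) ∧
  (∀ ε ∈ p.dom, ε ∈ C.Root → IsSacks (p.sacks ε)) ∧
  (∀ ε : ι, ¬ (ε ∈ p.dom ∧ ε ∈ C.Root) → p.sacks ε = ∅) ∧
  (∀ ε₁ ∈ p.dom, ∀ ε₂ ∈ p.dom, ε₁ ∈ C.Root → ε₂ ∈ C.Root → ε₁ ≠ ε₂ →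
    ∀ s t : List ℕ, IsStem (p.sacks ε₁) s → IsStem (p.sacks ε₂) t → ¬ NodeCompat s t) ∧
  (∀ α ∈ p.dom, α ∉ C.Root →
    (∀ s ∈ p.sacks (C.idx α), IsSTree G s (p.tr α s)) ∧
    (∀ s ∈ p.sacks (C.idx α), ∀ t ∈ p.sacks (C.idx α), s <+: t →
      p.tr α s = p.tr α t ∩ {u : List ℕ | u.length ≤ s.length + 1}) ∧
    (∀ l : ℕ, ∀ s ∈ p.sacks (C.idx α), ∃ s' ∈ p.sacks (C.idx α), s <+: s' ∧
      HasLargeSplitting G s' (p.tr α s') l)) ∧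
  (∀ (α : ι) (s : List ℕ), ¬ (α ∈ p.dom ∧ α ∉ C.Root ∧ s ∈ p.sacks (C.idx α)) →
    p.tr α s = ∅)

/-- The order on `P`: `q ≤ p`. -/
def CondLE {ι : Type} (C : IdxCtx ι) (q p : Cond ι) : Prop :=
  p.dom ⊆ q.dom ∧
  (∀ ε ∈ p.dom, ε ∈ C.Root → q.sacks ε ⊆ p.sacks ε) ∧
  (∀ α ∈ p.dom, α ∉ C.Root → ∀ s ∈ q.sacks (C.idx α), q.tr α s ⊆ p.tr α s)

/-- `pos(p, ≤n)`: families `a = (a(α))_{α ∈ dom p}` (normalized to `[]` off `dom p`)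
with `a(α) ∈ ω^{n+1}`, `a(ε) ∈ p(ε)` for `ε ∈ dom p ∩ Root`, and
`a(α) ∈ p(α, a(idx α))` for `α ∈ dom p ∖ Root`. -/
def Pos {ι : Type} (C : IdxCtx ι) (p : Cond ι) (n : ℕ) : Set (ι → List ℕ) :=
  {a : ι → List ℕ |
    (∀ α ∈ p.dom, (a α).length = n + 1) ∧
    (∀ ε ∈ p.dom, ε ∈ C.Root → a ε ∈ p.sacks ε) ∧
    (∀ α ∈ p.dom, α ∉ C.Root → a α ∈ p.tr α (a (C.idx α))) ∧
    (∀ α : ι, α ∉ p.dom → a α = ([] : List ℕ))}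

/-- `p` is finitary: `pos(p, ≤n)` is finite for every `n`. -/
def Finitary {ι : Type} (C : IdxCtx ι) (p : Cond ι) : Prop :=
  ∀ n : ℕ, (Pos C p n).Finite

/-- `p` is uniform: for every `α ∈ dom p ∖ Root` and `l` there is `h` such that
`p(α,s)` has `l`-large splitting for all `s ∈ p(idx α) ∩ 2^h`. -/
def Uniform {ι : Type} (G : GrowthPair) (C : IdxCtx ι) (p : Cond ι) : Prop :=
  ∀ α ∈ p.dom, α ∉ C.Root → ∀ l : ℕ, ∃ h : ℕ,
    ∀ s ∈ p.sacks (C.idx α), s.length = h → HasLargeSplitting G s (p.tr α s) l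

/-- For `q ≤ p`: `pos(p,≤n) ≡ pos(q,≤n)`, i.e. every `a ∈ pos(p,≤n)` has exactly one
`b ∈ pos(q,≤n)` with `b ↾ dom p = a`. -/
def PosEquiv {ι : Type} (C : IdxCtx ι) (p q : Cond ι) (n : ℕ) : Prop :=
  ∀ a ∈ Pos C p n, ∃! b : ι → List ℕ, b ∈ Pos C q n ∧ ∀ α ∈ p.dom, b α = a α


section Stmt7Aux

open Classical

lemma nodeCompat_symm : Symmetric NodeCompat := fun _ _ h => h.symm

lemma prefix_nodeCompat {u w v : List ℕ} (hu : u <+: v) (hw : w <+: v) : NodeCompat u w := by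
  rcases le_total u.length w.length with h | h
  · exact Or.inl (List.prefix_of_prefix_length_le hu hw h)
  · exact Or.inr (List.prefix_of_prefix_length_le hw hu h)

/-- The set of prefixes of a maximal-length node of an `s`-tree is a branch. -/
lemma branch_prefixes {G : GrowthPair} {s : List ℕ} {T : Set (List ℕ)}
    (hT : IsSTree G s T) {v : List ℕ} (hv : v ∈ T)
    (hlen : v.length = s.length + 1) : IsBranch T {u | u <+: v} := by
  obtain ⟨htree, hne, hlenT, hsucc, hval⟩ := hT
  refine ⟨fun u hu => htree v hv u hu, fun u hu w hw _ => prefix_nodeCompat hu hw, ?_⟩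
  intro b' hsub hsubT hpw
  refine Set.Subset.antisymm ?_ hsub
  intro u hu
  have hvb' : v ∈ b' := hsub (List.prefix_refl v)
  by_cases he : u = v
  · exact he ▸ List.prefix_refl v
  · rcases hpw hu hvb' he with h | h
    · exact h
    · have h1 : u.length ≤ s.length + 1 := hlenT u (hsubT hu)
      have h2 : v.length ≤ u.length := h.length_le
      have : v = u := h.eq_of_length (by omega)
      exact this ▸ List.prefix_refl v

/-- Every branch of an `s`-tree is the set of prefixes of a node of full length. -/
lemma branch_eq_prefixes {G : GrowthPair} {s : List ℕ} {T : Set (List ℕ)}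
    (hT : IsSTree G s T) {b : Set (List ℕ)} (hb : IsBranch T b) :
    ∃ v ∈ T, v.length = s.length + 1 ∧ b = {u | u <+: v} := by
  obtain ⟨htree, hne, hlenT, hsucc, hval⟩ := hT
  obtain ⟨hbT, hpw, hmax⟩ := hb
  have hnil : ([] : List ℕ) ∈ b := by
    have h' := hmax (insert ([] : List ℕ) b) (Set.subset_insert _ _)
      (by
        intro u hu
        rcases hu with rfl | hu
        · obtain ⟨w, hw⟩ := hne
          exact htree w hw [] (List.nil_prefix)
        · exact hbT hu)
      ((haveI : Std.Symm NodeCompat := ⟨fun _ _ h => nodeCompat_symm h⟩; Set.pairwise_insert_of_symm).mpr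
        ⟨hpw, fun w _ _ => Or.inl (List.nil_prefix)⟩)
    rw [← h']
    exact Set.mem_insert _ _
  have hbne : b.Nonempty := ⟨[], hnil⟩
  have hbfin : b.Finite := by
    refine Set.Finite.of_finite_image (f := List.length) ?_ ?_
    · exact Set.Finite.subset (Set.finite_Iic (s.length + 1))
        (by rintro _ ⟨u, hu, rfl⟩; exact hlenT u (hbT hu))
    · intro u hu w hw h
      by_cases he : u = w
      · exact he
      · rcases hpw hu hw he with h1 | h1
        · exact h1.eq_of_length h
        · exact (h1.eq_of_length h.symm).symm
  obtain ⟨v, hvb, hvmax⟩ := Set.exists_max_image b List.length hbfin hbne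
  have hvT : v ∈ T := hbT hvb
  have hprefv : ∀ w ∈ b, w <+: v := by
    intro w hw
    by_cases he : w = v
    · exact he ▸ List.prefix_refl v
    · rcases hpw hw hvb he with h | h
      · exact h
      · have : v = w := h.eq_of_length (le_antisymm h.length_le (hvmax w hw))
        exact this ▸ List.prefix_refl v
  have hvlen : v.length = s.length + 1 := by
    refine le_antisymm (hlenT v hvT) ?_
    by_contra hlt
    push_neg at hlt
    obtain ⟨k, hk⟩ := hsucc v hvT (by omega)
    have h' := hmax (insert (v ++ [k]) b) (Set.subset_insert _ _)
      (by
        intro u hu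
        rcases hu with rfl | hu
        · exact hk
        · exact hbT hu)
      ((haveI : Std.Symm NodeCompat := ⟨fun _ _ h => nodeCompat_symm h⟩; Set.pairwise_insert_of_symm).mpr
        ⟨hpw, fun w hw _ => Or.inr ((hprefv w hw).trans ⟨[k], rfl⟩)⟩)
    have : v ++ [k] ∈ b := by rw [← h']; exact Set.mem_insert _ _
    have := hvmax _ this
    simp at this
  refine ⟨v, hvT, hvlen, ?_⟩
  ext u
  constructor
  · exact fun hu => hprefv u hu
  · intro hu
    have h' := hmax (insert u b) (Set.subset_insert _ _)
      (by
        intro w hw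
        rcases hw with rfl | hw
        · exact htree v hvT w hu
        · exact hbT hw)
      ((haveI : Std.Symm NodeCompat := ⟨fun _ _ h => nodeCompat_symm h⟩; Set.pairwise_insert_of_symm).mpr
        ⟨hpw, fun w hw _ => prefix_nodeCompat hu (hprefv w hw)⟩)
    rw [← h']
    exact Set.mem_insert _ _

/-- Coherence of norms: a low node of a small tree has the same splitting norm in any
coherent extension. -/
lemma coh_norm (G : GrowthPair) {s t : List ℕ} {T T' : Set (List ℕ)}
    (hpre : s <+: t)
    (hST : T = T' ∩ {u : List ℕ | u.length ≤ s.length + 1})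
    {u : List ℕ} (hu : u ∈ T) (hulen : u.length ≤ s.length) :
    u ∈ T' ∧ splitNorm G t u T' = splitNorm G s u T := by
  have huT' : u ∈ T' := by rw [hST] at hu; exact hu.1
  have htake : t.take u.length = s.take u.length := by
    obtain ⟨r, rfl⟩ := hpre
    exact List.take_append_of_le_length hulen
  have hsucc : succSet T' u = succSet T u := by
    ext k
    simp only [succSet, Set.mem_setOf_eq, hST, Set.mem_inter_iff]
    constructor
    · intro h
      exact ⟨h, by simp only [Set.mem_setOf_eq, List.length_append, List.length_singleton]; omega⟩
    · exact And.left
  refine ⟨huT', ?_⟩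
  unfold splitNorm
  rw [htake, hsucc]

end Stmt7Aux

/-- For `p ∈ P`, `α ∈ dom p ∩ I_ε`, `l ∈ ω` and `s ∈ p(ε)` there is `s' ⊇ s` in `p(ε)`
such that every branch of `p(α,s')` contains at least `l` many `l`-large splitting
nodes. -/
theorem stmt7 (G : GrowthPair) {ι : Type} (C : IdxCtx ι)
    (p : Cond ι) (hp : InP G C p)
    (ε : ι) (hε : ε ∈ C.Root) (α : ι) (hα : α ∈ p.dom) (hαR : α ∉ C.Root)
    (hidx : C.idx α = ε) (l : ℕ) (s : List ℕ) (hs : s ∈ p.sacks ε) :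
    ∃ s' ∈ p.sacks ε, s <+: s' ∧
      ∀ b : Set (List ℕ), IsBranch (p.tr α s') b →
        l ≤ {t : List ℕ | t ∈ b ∧ IsLargeSplit G s' (p.tr α s') l t}.ncard := by
  classical
  subst hidx
  obtain ⟨h1, h2, h3⟩ := hp.2.2.2.2.2.1 α hα hαR
  -- Step lemma: extend any node of the Sacks tree so that the new large-splitting front
  -- lies strictly above the old node's height.
  have step : ∀ t : List ℕ, ∃ t' : List ℕ, t ∈ p.sacks (C.idx α) →
      t' ∈ p.sacks (C.idx α) ∧ t <+: t' ∧ ∃ L : ℕ, l ≤ L ∧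
        HasLargeSplitting G t' (p.tr α t') L ∧
        ∀ u, IsLargeSplit G t' (p.tr α t') L u →
          t.length < u.length ∧ u.length ≤ t'.length := by
    intro t
    by_cases ht : t ∈ p.sacks (C.idx α)
    swap
    · exact ⟨t, fun h => absurd h ht⟩
    set V : Finset ℝ := (Finset.range (t.length + 1)).biUnion (fun m =>
      (Finset.range (G.fOf (t.take m) + 1)).image
        (fun k : ℕ => Real.logb (G.gOf (t.take m)) (k : ℝ))) with hV
    obtain ⟨L₀, hL₀⟩ := exists_nat_gt ((insert (0 : ℝ) V).max' (Finset.insert_nonempty _ _))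
    set L := max L₀ l with hLdef
    have hVlt : ∀ v ∈ V, v < (L : ℝ) := by
      intro v hv
      have h1' : v ≤ (insert (0 : ℝ) V).max' (Finset.insert_nonempty _ _) :=
        Finset.le_max' _ v (Finset.mem_insert_of_mem hv)
      have h2' : (L₀ : ℝ) ≤ (L : ℝ) := by exact_mod_cast le_max_left L₀ l
      linarith
    have hL1 : 1 ≤ L := by
      have h0 : (0 : ℝ) < (L₀ : ℝ) :=
        lt_of_le_of_lt (Finset.le_max' _ _ (Finset.mem_insert_self _ _)) hL₀
      have h0' : 0 < L₀ := by exact_mod_cast h0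
      exact le_trans h0' (le_max_left _ _)
    obtain ⟨t', ht', hpre, hls⟩ := h3 L t ht
    refine ⟨t', fun _ => ⟨ht', hpre, L, le_max_right _ _, hls, ?_⟩⟩
    rintro u ⟨huT, hnorm⟩
    obtain ⟨htree', hne', hlen', hsucc', hval'⟩ := h1 t' ht'
    have hub : u.length ≤ t'.length := by
      by_contra hgt
      push_neg at hgt
      have hempty : succSet (p.tr α t') u = ∅ := by
        ext k
        simp only [succSet, Set.mem_setOf_eq, Set.mem_empty_iff_false, iff_false]
        intro hk
        have := hlen' _ hk
        simp only [List.length_append, List.length_singleton] at this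
        omega
      unfold splitNorm at hnorm
      rw [hempty] at hnorm
      simp only [Set.ncard_empty, Nat.cast_zero, Real.logb_zero] at hnorm
      have : (1 : ℝ) ≤ (L : ℝ) := by exact_mod_cast hL1
      linarith
    refine ⟨?_, hub⟩
    by_contra hle
    push_neg at hle
    have htake : t'.take u.length = t.take u.length := by
      obtain ⟨r, rfl⟩ := hpre
      exact List.take_append_of_le_length hle
    have hsubset : succSet (p.tr α t') u ⊆ ↑(Finset.range (G.fOf (t.take u.length))) := by
      intro k hk
      have hm : u.length < (u ++ [k]).length := by
        simp
      have h5 := hval' _ hk u.length hm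
      have hg : (u ++ [k]).get ⟨u.length, hm⟩ = k := by
        simp [List.get_eq_getElem, List.getElem_concat_length]
      rw [hg, htake] at h5
      simpa using h5
    have hncard : (succSet (p.tr α t') u).ncard ≤ G.fOf (t.take u.length) := by
      calc (succSet (p.tr α t') u).ncard
          ≤ (↑(Finset.range (G.fOf (t.take u.length))) : Set ℕ).ncard :=
            Set.ncard_le_ncard hsubset (Finset.finite_toSet _)
        _ = G.fOf (t.take u.length) := by
            rw [Set.ncard_coe_finset, Finset.card_range]
    have hmem : splitNorm G t' u (p.tr α t') ∈ V := by
      unfold splitNorm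
      rw [htake]
      refine Finset.mem_biUnion.mpr ⟨u.length, Finset.mem_range.mpr (by omega), ?_⟩
      exact Finset.mem_image.mpr
        ⟨(succSet (p.tr α t') u).ncard, Finset.mem_range.mpr (by omega), rfl⟩
    have := hVlt _ hmem
    linarith
  choose F hF using step
  set σ : ℕ → List ℕ := fun i => F^[i] s with hσ
  have hσsucc : ∀ i, σ (i + 1) = F (σ i) := by
    intro i
    rw [hσ]
    exact Function.iterate_succ_apply' F i s
  have hσE : ∀ i, σ i ∈ p.sacks (C.idx α) := by
    intro i
    induction i with
    | zero => exact hs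
    | succ i ih => rw [hσsucc]; exact (hF _ ih).1
  have hstep : ∀ i, σ i <+: σ (i + 1) ∧ ∃ L : ℕ, l ≤ L ∧
      HasLargeSplitting G (σ (i + 1)) (p.tr α (σ (i + 1))) L ∧
      ∀ u, IsLargeSplit G (σ (i + 1)) (p.tr α (σ (i + 1))) L u →
        (σ i).length < u.length ∧ u.length ≤ (σ (i + 1)).length := by
    intro i
    rw [hσsucc]
    exact (hF _ (hσE i)).2
  have hchain : ∀ i j, i ≤ j → σ i <+: σ j := by
    intro i j hij
    induction hij with
    | refl => exact List.prefix_refl _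
    | step _ ih => exact ih.trans (hstep _).1
  refine ⟨σ l, hσE l, hchain 0 l (Nat.zero_le l), ?_⟩
  intro b hb
  obtain ⟨v, hvT, hvlen, rfl⟩ := branch_eq_prefixes (h1 _ (hσE l)) hb
  have hA : ∀ i : ℕ, ∃ a : List ℕ, i < l →
      a <+: v ∧ IsLargeSplit G (σ l) (p.tr α (σ l)) l a ∧
      (σ i).length < a.length ∧ a.length ≤ (σ (i + 1)).length := by
    intro i
    by_cases hi : i < l
    swap
    · exact ⟨[], fun h => absurd h hi⟩
    obtain ⟨hpre, L, hlL, hsplit, hbound⟩ := hstep i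
    have hpre1 : σ (i + 1) <+: σ l := hchain _ _ hi
    have hcoh := h2 _ (hσE (i + 1)) _ (hσE l) hpre1
    set w := v.take ((σ (i + 1)).length + 1) with hw
    have hwlen : w.length = (σ (i + 1)).length + 1 := by
      rw [hw, List.length_take]
      have := hpre1.length_le
      omega
    have hwT : w ∈ p.tr α (σ (i + 1)) := by
      rw [hcoh]
      exact ⟨(h1 _ (hσE l)).1 v hvT w (List.take_prefix _ _), by
        simp only [Set.mem_setOf_eq, hwlen, le_refl]⟩
    have hbr := branch_prefixes (h1 _ (hσE (i + 1))) hwT hwlen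
    obtain ⟨a, haF, hab⟩ := hsplit.2.2 _ hbr
    obtain ⟨hlow, hhigh⟩ := hbound a haF
    have hav : a <+: v := List.IsPrefix.trans hab (List.take_prefix _ _)
    refine ⟨a, fun _ => ⟨hav, ?_, hlow, hhigh⟩⟩
    obtain ⟨haT, hanorm⟩ := haF
    obtain ⟨haT', heq⟩ := coh_norm G hpre1 hcoh haT hhigh
    refine ⟨haT', ?_⟩
    rw [heq]
    calc (l : ℝ) ≤ (L : ℝ) := by exact_mod_cast hlL
      _ ≤ _ := hanorm
  choose A hA using hA
  have hlt : ∀ i j, i < j → j < l → (A i).length < (A j).length := by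
    intro i j hij hjl
    have h1' := (hA i (lt_trans hij hjl)).2.2.2
    have h2' := (hA j hjl).2.2.1
    have h3' := (hchain (i + 1) j hij).length_le
    omega
  have hinj : Set.InjOn A ↑(Finset.range l) := by
    intro i hi j hj hij
    simp only [Finset.coe_range, Set.mem_Iio] at hi hj
    by_contra hne
    rcases lt_trichotomy i j with h | h | h
    · have := hlt i j h hj; rw [hij] at this; omega
    · exact hne h
    · have := hlt j i h hi; rw [hij] at this; omega
  have hcard : ((Finset.range l).image A).card = l := by
    rw [Finset.card_image_of_injOn hinj, Finset.card_range]
  have hsubS : ↑((Finset.range l).image A) ⊆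
      {t : List ℕ | t ∈ {u : List ℕ | u <+: v} ∧
        IsLargeSplit G (σ l) (p.tr α (σ l)) l t} := by
    intro a ha
    simp only [Finset.coe_image, Finset.coe_range, Set.mem_image, Set.mem_Iio] at ha
    obtain ⟨i, hi, rfl⟩ := ha
    exact ⟨(hA i hi).1, (hA i hi).2.1⟩
  have hSfin : ({t : List ℕ | t ∈ {u : List ℕ | u <+: v} ∧
      IsLargeSplit G (σ l) (p.tr α (σ l)) l t}).Finite := by
    refine Set.Finite.subset (Set.Finite.image (fun m => v.take m) (Set.finite_Iic v.length)) ?_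
    intro u hu
    exact ⟨u.length, hu.1.length_le, (List.prefix_iff_eq_take.mp hu.1).symm⟩
  calc l = ((Finset.range l).image A).card := hcard.symm
    _ = (↑((Finset.range l).image A) : Set (List ℕ)).ncard := (Set.ncard_coe_finset _).symm
    _ ≤ _ := Set.ncard_le_ncard hsubS hSfin
end

section
/- Assume CH (2^{ℵ₀} = ℵ₁). Then the poset P satisfies the ℵ₂-chain condition: every antichain of P (a set of conditions that are pairwise incompatible, i.e., pairwise have no common lower bound in P) has cardinality at most ℵ₁. -/
/-!
Two conditions `p, q ∈ P` that agree on `p.dom ∩ q.dom` and have the same set of stems are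
compatible: keep `p` on its domain and `q` on the rest, and shrink every Sacks coordinate to one
side of its stem, coordinates of `p` to the `0`-side and the others to the `1`-side, so that the
stems stay pairwise incomparable.

Among `ℵ₂` conditions two such ones exist under CH, by a Δ-system argument for countable sets:
enumerate the conditions along `ω₂`; a pressing-down argument at a point of cofinality `ω₁` gives
`β < ω₂` and unboundedly many `j` whose domain meets the domains of earlier conditions only inside
the domains of the first `β` ones, a set `W` of size `ℵ₁`. As `ℵ₁ ^ ℵ₀ = ℵ₁`, the restrictions of
conditions to `W` together with their stem sets take only `ℵ₁` values, so two of these `j` agree.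
-/

open Cardinal Ordinal Set

universe u v

theorem not_nodeCompat_of_prefix {a b x y : List ℕ} (h : ¬ NodeCompat a b) (hax : a <+: x)
    (hby : b <+: y) : ¬ NodeCompat x y := by
  rintro (hxy | hyx)
  · exact h (List.prefix_or_prefix_of_prefix (hax.trans hxy) hby)
  · exact h (List.prefix_or_prefix_of_prefix hax (hby.trans hyx))

theorem not_nodeCompat_append_singleton {w : List ℕ} {a b : ℕ} (h : a ≠ b) :
    ¬ NodeCompat (w ++ [a]) (w ++ [b]) := by
  have key {a b : ℕ} (hab : w ++ [a] <+: w ++ [b]) : a = b := by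
    simpa using hab.eq_of_length (by simp)
  rintro (hab | hba)
  exacts [h (key hab), h (key hba).symm]

theorem NodeCompat.symm {s t : List ℕ} (h : NodeCompat s t) : NodeCompat t s := Or.symm h

theorem NodeCompat.prefix_of_length_le {t u : List ℕ} (h : NodeCompat t u)
    (hl : t.length ≤ u.length) : t <+: u :=
  h.elim id fun hut => by rw [hut.eq_of_length (hut.length_le.antisymm hl)]

theorem exists_append_singleton_prefix {t u : List ℕ} (h : t <+: u) (hne : t ≠ u) :
    ∃ k, t ++ [k] <+: u := by
  obtain ⟨d, rfl⟩ := h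
  cases d with
  | nil => exact absurd (List.append_nil t).symm hne
  | cons k d => exact ⟨k, d, by simp⟩

def cone (T : Set (List ℕ)) (u : List ℕ) : Set (List ℕ) := {t ∈ T | NodeCompat t u}

section Cone

variable {T : Set (List ℕ)} {u : List ℕ}

theorem cone_subset : cone T u ⊆ T := sep_subset _ _

theorem cone_empty : cone ∅ u = ∅ := sep_empty _

theorem mem_cone_of_prefix {t : List ℕ} (ht : t ∈ T) (hut : u <+: t) : t ∈ cone T u :=
  ⟨ht, Or.inr hut⟩

theorem exists_extension_of_mem_cone (hu : u ∈ T) {t : List ℕ} (ht : t ∈ cone T u) :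
    ∃ t' ∈ T, t <+: t' ∧ u <+: t' := by
  rcases le_total t.length u.length with hl | hl
  · exact ⟨u, hu, ht.2.prefix_of_length_le hl, List.prefix_rfl⟩
  · exact ⟨t, ht.1, List.prefix_rfl, ht.2.symm.prefix_of_length_le hl⟩

theorem IsSacks.cone (hT : IsSacks T) (hu : u ∈ T) : IsSacks (cone T u) := by
  obtain ⟨htree, -, hbin, hsucc, hsplit⟩ := hT
  refine ⟨fun s hs t hts => ⟨htree s hs.1 t hts, ?_⟩, ⟨u, hu, Or.inl List.prefix_rfl⟩,
    fun s hs => hbin s hs.1, fun t ht => ?_, fun t ht => ?_⟩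
  · exact hs.2.elim (fun hsu => Or.inl (hts.trans hsu))
      fun hus => List.prefix_or_prefix_of_prefix hts hus
  · by_cases hut : u <+: t
    · obtain ⟨k, hk⟩ := hsucc t ht.1
      exact ⟨k, mem_cone_of_prefix hk (hut.trans (List.prefix_append _ _))⟩
    · obtain ⟨k, hk⟩ := exists_append_singleton_prefix (ht.2.resolve_right hut)
        fun h => hut (h ▸ List.prefix_rfl)
      exact ⟨k, htree u hu _ hk, Or.inl hk⟩
  · obtain ⟨t', ht', htt', hut'⟩ := exists_extension_of_mem_cone hu ht
    obtain ⟨w, htw, hwT, i, j, hij, hi, hj⟩ := hsplit t' ht'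
    have huw := hut'.trans htw
    exact ⟨w, htt'.trans htw, mem_cone_of_prefix hwT huw, i, j, hij,
      mem_cone_of_prefix hi (huw.trans (List.prefix_append _ _)),
      mem_cone_of_prefix hj (huw.trans (List.prefix_append _ _))⟩

theorem IsSplitNode.prefix_of_cone {s : List ℕ} (hs : IsSplitNode (cone T u) s) : u <+: s := by
  obtain ⟨⟨-, hsu⟩, i, j, hij, ⟨-, hiu⟩, ⟨-, hju⟩⟩ := hs
  by_contra hus
  have key {k : ℕ} (hk : NodeCompat (s ++ [k]) u) : s ++ [k] <+: u := by
    rcases hk with hk | hk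
    · exact hk
    rcases List.prefix_concat_iff.1 hk with rfl | hus'
    exacts [List.prefix_rfl, absurd hus' hus]
  exact not_nodeCompat_append_singleton hij (List.prefix_or_prefix_of_prefix (key hiu) (key hju))

theorem exists_prefix_mem_cone {P : List ℕ → Prop} (hu : u ∈ T)
    (h : ∀ s ∈ T, ∃ s' ∈ T, s <+: s' ∧ P s') :
    ∀ s ∈ cone T u, ∃ s' ∈ cone T u, s <+: s' ∧ P s' := by
  intro s hs
  obtain ⟨t, ht, hst, hut⟩ := exists_extension_of_mem_cone hu hs
  obtain ⟨s', hs', hts', hP⟩ := h t ht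
  exact ⟨s', mem_cone_of_prefix hs' (hut.trans hts'), hst.trans hts', hP⟩

end Cone

theorem IsSacks.exists_isStem {T : Set (List ℕ)} (hT : IsSacks T) : ∃ s, IsStem T s := by
  obtain ⟨htree, ⟨t, ht⟩, -, -, hsplit⟩ := hT
  obtain ⟨w, -, hw⟩ := hsplit [] (htree t ht [] List.nil_prefix)
  obtain ⟨s, hs, hmin⟩ := (measure List.length).wf.has_min {s | IsSplitNode T s} ⟨w, hw⟩
  exact ⟨s, hs, fun t ht hts =>
    hts.eq_of_length (hts.length_le.antisymm (not_lt.1 (hmin t ht)))⟩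

noncomputable def stemOf (T : Set (List ℕ)) : List ℕ := Classical.epsilon (IsStem T)

theorem IsSacks.isStem_stemOf {T : Set (List ℕ)} (hT : IsSacks T) : IsStem T (stemOf T) :=
  Classical.epsilon_spec hT.exists_isStem

theorem IsSacks.stemOf_append_mem {T : Set (List ℕ)} (hT : IsSacks T) {i : ℕ} (hi : i < 2) :
    stemOf T ++ [i] ∈ T := by
  obtain ⟨-, a, b, hab, ha, hb⟩ := hT.isStem_stemOf.1
  have ha2 := hT.2.2.1 _ ha a (by simp)
  have hb2 := hT.2.2.1 _ hb b (by simp)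
  obtain rfl | rfl : i = a ∨ i = b := by omega
  exacts [ha, hb]

noncomputable def stemCone (T : Set (List ℕ)) (i : ℕ) : Set (List ℕ) := cone T (stemOf T ++ [i])

theorem IsSacks.stemCone {T : Set (List ℕ)} (hT : IsSacks T) {i : ℕ} (hi : i < 2) :
    IsSacks (stemCone T i) :=
  hT.cone (hT.stemOf_append_mem hi)

def IsTreeSystem (G : GrowthPair) (S : Set (List ℕ)) (tr : List ℕ → Set (List ℕ)) : Prop :=
  (∀ s ∈ S, IsSTree G s (tr s)) ∧
  (∀ s ∈ S, ∀ t ∈ S, s <+: t → tr s = tr t ∩ {u : List ℕ | u.length ≤ s.length + 1}) ∧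
  (∀ l : ℕ, ∀ s ∈ S, ∃ s' ∈ S, s <+: s' ∧ HasLargeSplitting G s' (tr s') l)

theorem IsTreeSystem.cone {G : GrowthPair} {S : Set (List ℕ)} {tr tr' : List ℕ → Set (List ℕ)}
    (h : IsTreeSystem G S tr) {u : List ℕ} (hu : u ∈ S) (htr : ∀ s ∈ cone S u, tr' s = tr s) :
    IsTreeSystem G (cone S u) tr' := by
  obtain ⟨htree, hcoh, hlarge⟩ := h
  refine ⟨fun s hs => htr s hs ▸ htree s hs.1, fun s hs t ht hst => ?_, fun l s hs => ?_⟩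
  · rw [htr s hs, htr t ht]
    exact hcoh s hs.1 t ht.1 hst
  · obtain ⟨s', hs', hss', hl⟩ := exists_prefix_mem_cone hu (hlarge l) s hs
    exact ⟨s', hs', hss', htr s' hs' ▸ hl⟩

namespace InP

variable {ι : Type} {G : GrowthPair} {C : IdxCtx ι} {p : Cond ι} {ε ε₁ ε₂ α : ι}

theorem idx_mem_dom (hp : InP G C p) (h : α ∈ p.dom) : C.idx α ∈ p.dom := hp.2.1 α h

theorem isSacks (hp : InP G C p) (h : ε ∈ p.dom) (hR : ε ∈ C.Root) : IsSacks (p.sacks ε) :=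
  hp.2.2.1 ε h hR

theorem sacks_eq_empty (hp : InP G C p) (h : ¬ (ε ∈ p.dom ∧ ε ∈ C.Root)) : p.sacks ε = ∅ :=
  hp.2.2.2.1 ε h

theorem isTreeSystem (hp : InP G C p) (h : α ∈ p.dom) (hR : α ∉ C.Root) :
    IsTreeSystem G (p.sacks (C.idx α)) (p.tr α) :=
  hp.2.2.2.2.2.1 α h hR

theorem tr_eq_empty (hp : InP G C p) {s : List ℕ}
    (h : ¬ (α ∈ p.dom ∧ α ∉ C.Root ∧ s ∈ p.sacks (C.idx α))) : p.tr α s = ∅ :=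
  hp.2.2.2.2.2.2 α s h

theorem not_nodeCompat_stemOf (hp : InP G C p) (h₁ : ε₁ ∈ p.dom ∩ C.Root)
    (h₂ : ε₂ ∈ p.dom ∩ C.Root) (hne : ε₁ ≠ ε₂) :
    ¬ NodeCompat (stemOf (p.sacks ε₁)) (stemOf (p.sacks ε₂)) :=
  hp.2.2.2.2.1 ε₁ h₁.1 ε₂ h₂.1 h₁.2 h₂.2 hne _ _ (hp.isSacks h₁.1 h₁.2).isStem_stemOf
    (hp.isSacks h₂.1 h₂.2).isStem_stemOf

end InP

namespace Cond

variable {ι : Type} {G : GrowthPair} {C : IdxCtx ι} {p q : Cond ι} {ε ε₁ ε₂ α : ι}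
  {s : List ℕ}

def stemSet (C : IdxCtx ι) (p : Cond ι) : Set (List ℕ) :=
  (fun ε => stemOf (p.sacks ε)) '' (p.dom ∩ C.Root)

open Classical in
noncomputable def amalgSacks (p q : Cond ι) (ε : ι) : Set (List ℕ) :=
  if ε ∈ p.dom then stemCone (p.sacks ε) 0 else stemCone (q.sacks ε) 1

noncomputable def amalg (C : IdxCtx ι) (p q : Cond ι) : Cond ι where
  dom := p.dom ∪ q.dom
  sacks := amalgSacks p q
  tr α s := open Classical in
    if s ∈ amalgSacks p q (C.idx α) then (if α ∈ p.dom then p.tr α s else q.tr α s) else ∅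

theorem amalg_sacks_of_mem (h : ε ∈ p.dom) :
    (amalg C p q).sacks ε = stemCone (p.sacks ε) 0 := if_pos h

theorem amalg_sacks_of_not_mem (h : ε ∉ p.dom) :
    (amalg C p q).sacks ε = stemCone (q.sacks ε) 1 := if_neg h

theorem amalg_sacks_eq_stemCone_right (hsacks : EqOn p.sacks q.sacks (p.dom ∩ q.dom))
    (hq : ε ∈ q.dom) : ∃ i < 2, (amalg C p q).sacks ε = stemCone (q.sacks ε) i := by
  by_cases hp : ε ∈ p.dom
  · exact ⟨0, two_pos, by rw [amalg_sacks_of_mem hp, hsacks ⟨hp, hq⟩]⟩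
  · exact ⟨1, one_lt_two, amalg_sacks_of_not_mem hp⟩

theorem amalg_tr_of_mem (h : α ∈ p.dom) (hs : s ∈ (amalg C p q).sacks (C.idx α)) :
    (amalg C p q).tr α s = p.tr α s := by
  simp only [amalg] at hs ⊢
  rw [if_pos hs, if_pos h]

theorem amalg_tr_of_not_mem (h : α ∉ p.dom) (hs : s ∈ (amalg C p q).sacks (C.idx α)) :
    (amalg C p q).tr α s = q.tr α s := by
  simp only [amalg] at hs ⊢
  rw [if_pos hs, if_neg h]

theorem amalg_le_left : CondLE C (amalg C p q) p := by
  refine ⟨subset_union_left, fun ε hε _ => ?_, fun α hα _ s hs => ?_⟩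
  · rw [amalg_sacks_of_mem hε]
    exact cone_subset
  · rw [amalg_tr_of_mem hα hs]

theorem amalg_le_right (hsacks : EqOn p.sacks q.sacks (p.dom ∩ q.dom))
    (htr : EqOn p.tr q.tr (p.dom ∩ q.dom)) : CondLE C (amalg C p q) q := by
  refine ⟨subset_union_right, fun ε hε _ => ?_, fun α hα _ s hs => ?_⟩
  · obtain ⟨i, -, hi⟩ := amalg_sacks_eq_stemCone_right hsacks hε
    exact hi ▸ cone_subset
  · by_cases hp : α ∈ p.dom
    · rw [amalg_tr_of_mem hp hs, htr ⟨hp, hα⟩]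
    · rw [amalg_tr_of_not_mem hp hs]

theorem not_nodeCompat_stemOf_of_stemSet_eq (hq : InP G C q) (hstems : stemSet C p = stemSet C q)
    (h₁ : ε₁ ∈ p.dom ∩ C.Root) (h₂ : ε₂ ∈ q.dom ∩ C.Root) :
    ¬ NodeCompat (stemOf (p.sacks ε₁) ++ [0]) (stemOf (q.sacks ε₂) ++ [1]) := by
  obtain ⟨ε', h', heq⟩ : stemOf (p.sacks ε₁) ∈ stemSet C q := hstems ▸ mem_image_of_mem _ h₁
  rw [← heq]
  by_cases hε : ε' = ε₂
  · exact hε ▸ not_nodeCompat_append_singleton zero_ne_one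
  · exact not_nodeCompat_of_prefix (hq.not_nodeCompat_stemOf h' h₂ hε) (List.prefix_append _ _)
      (List.prefix_append _ _)

theorem amalg_stem_prefix {v : List ℕ} (hv : IsStem ((amalg C p q).sacks ε) v) :
    ε ∈ p.dom ∧ stemOf (p.sacks ε) ++ [0] <+: v ∨
      ε ∉ p.dom ∧ stemOf (q.sacks ε) ++ [1] <+: v := by
  by_cases hp : ε ∈ p.dom
  · rw [amalg_sacks_of_mem hp] at hv
    exact Or.inl ⟨hp, hv.1.prefix_of_cone⟩
  · rw [amalg_sacks_of_not_mem hp] at hv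
    exact Or.inr ⟨hp, hv.1.prefix_of_cone⟩

theorem amalg_not_nodeCompat_stems (hp : InP G C p) (hq : InP G C q)
    (hstems : stemSet C p = stemSet C q) (h₁ : ε₁ ∈ (amalg C p q).dom ∩ C.Root)
    (h₂ : ε₂ ∈ (amalg C p q).dom ∩ C.Root) (hne : ε₁ ≠ ε₂) {v₁ v₂ : List ℕ}
    (hv₁ : IsStem ((amalg C p q).sacks ε₁) v₁) (hv₂ : IsStem ((amalg C p q).sacks ε₂) v₂) :
    ¬ NodeCompat v₁ v₂ := by
  have pre (i : ℕ) {w v : List ℕ} (h : w ++ [i] <+: v) : w <+: v := (List.prefix_append _ _).trans h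
  rcases amalg_stem_prefix hv₁ with ⟨hp₁, hv₁⟩ | ⟨hp₁, hv₁⟩ <;>
    rcases amalg_stem_prefix hv₂ with ⟨hp₂, hv₂⟩ | ⟨hp₂, hv₂⟩
  · exact not_nodeCompat_of_prefix (hp.not_nodeCompat_stemOf ⟨hp₁, h₁.2⟩ ⟨hp₂, h₂.2⟩ hne)
      (pre 0 hv₁) (pre 0 hv₂)
  · exact not_nodeCompat_of_prefix (not_nodeCompat_stemOf_of_stemSet_eq hq hstems ⟨hp₁, h₁.2⟩
      ⟨h₂.1.resolve_left hp₂, h₂.2⟩) hv₁ hv₂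
  · exact fun h => not_nodeCompat_of_prefix (not_nodeCompat_stemOf_of_stemSet_eq hq hstems
      ⟨hp₂, h₂.2⟩ ⟨h₁.1.resolve_left hp₁, h₁.2⟩) hv₂ hv₁ h.symm
  · exact not_nodeCompat_of_prefix (hq.not_nodeCompat_stemOf ⟨h₁.1.resolve_left hp₁, h₁.2⟩
      ⟨h₂.1.resolve_left hp₂, h₂.2⟩ hne) (pre 1 hv₁) (pre 1 hv₂)

theorem amalg_isSacks (hp : InP G C p) (hq : InP G C q) (hε : ε ∈ (amalg C p q).dom)
    (hR : ε ∈ C.Root) : IsSacks ((amalg C p q).sacks ε) := by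
  by_cases hp' : ε ∈ p.dom
  · rw [amalg_sacks_of_mem hp']
    exact (hp.isSacks hp' hR).stemCone two_pos
  · rw [amalg_sacks_of_not_mem hp']
    exact (hq.isSacks (hε.resolve_left hp') hR).stemCone one_lt_two

theorem amalg_isTreeSystem (hp : InP G C p) (hq : InP G C q)
    (hsacks : EqOn p.sacks q.sacks (p.dom ∩ q.dom)) (hα : α ∈ (amalg C p q).dom)
    (hR : α ∉ C.Root) : IsTreeSystem G ((amalg C p q).sacks (C.idx α)) ((amalg C p q).tr α) := by
  by_cases hp' : α ∈ p.dom
  · have hε := hp.idx_mem_dom hp'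
    rw [amalg_sacks_of_mem hε]
    exact (hp.isTreeSystem hp' hR).cone ((hp.isSacks hε (C.idx_mem α)).stemOf_append_mem two_pos)
      fun s hs => amalg_tr_of_mem hp' (by rwa [amalg_sacks_of_mem hε])
  · have hq' := hα.resolve_left hp'
    have hε := hq.idx_mem_dom hq'
    obtain ⟨i, hi, heq⟩ := amalg_sacks_eq_stemCone_right (C := C) hsacks hε
    rw [heq]
    exact (hq.isTreeSystem hq' hR).cone ((hq.isSacks hε (C.idx_mem α)).stemOf_append_mem hi)
      fun s hs => amalg_tr_of_not_mem hp' (heq ▸ hs)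

theorem inP_amalg (hp : InP G C p) (hq : InP G C q)
    (hsacks : EqOn p.sacks q.sacks (p.dom ∩ q.dom)) (hstems : stemSet C p = stemSet C q) :
    InP G C (amalg C p q) := by
  refine ⟨hp.1.union hq.1, ?_, fun ε hε hR => amalg_isSacks hp hq hε hR, fun ε hε => ?_,
    fun ε₁ h₁ ε₂ h₂ hR₁ hR₂ hne _ _ =>
      amalg_not_nodeCompat_stems hp hq hstems ⟨h₁, hR₁⟩ ⟨h₂, hR₂⟩ hne,
    fun α hα hR => amalg_isTreeSystem hp hq hsacks hα hR, fun α s h => ?_⟩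
  · rintro α (h | h)
    exacts [Or.inl (hp.idx_mem_dom h), Or.inr (hq.idx_mem_dom h)]
  · by_cases hp' : ε ∈ p.dom
    · rw [amalg_sacks_of_mem hp', hp.sacks_eq_empty fun h => hε ⟨Or.inl hp', h.2⟩, stemCone,
        cone_empty]
    · rw [amalg_sacks_of_not_mem hp', hq.sacks_eq_empty fun h => hε ⟨Or.inr h.1, h.2⟩, stemCone,
        cone_empty]
  · simp only [amalg]
    split_ifs with hs hp'
    · exact hp.tr_eq_empty fun h' => h ⟨Or.inl h'.1, h'.2.1, hs⟩
    · exact hq.tr_eq_empty fun h' => h ⟨Or.inr h'.1, h'.2.1, hs⟩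
    · rfl

end Cond

namespace Ordinal

noncomputable def closureChain (γ : Ordinal.{u} → Ordinal.{u}) (ξ : Ordinal.{u}) : Ordinal.{u} :=
  ⨆ η : Iio ξ, (closureChain γ η + γ (closureChain γ η) + 1)
termination_by ξ
decreasing_by exact η.2

variable {γ : Ordinal.{u} → Ordinal.{u}} {κ : Cardinal.{u}}

theorem add_lt_closureChain {η ξ : Ordinal.{u}} (h : η < ξ) :
    closureChain γ η + γ (closureChain γ η) < closureChain γ ξ := by
  conv_rhs => rw [closureChain]
  exact Ordinal.lt_iSup_iff.2 ⟨⟨η, h⟩, lt_add_one _⟩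

theorem closureChain_strictMono : StrictMono (closureChain γ) :=
  fun _ _ h => le_self_add.trans_lt (add_lt_closureChain h)

theorem apply_closureChain_lt {η ξ : Ordinal.{u}} (h : η < ξ) :
    γ (closureChain γ η) < closureChain γ ξ :=
  le_add_self.trans_lt (add_lt_closureChain h)

theorem closureChain_lt_ord (hκ : κ.IsRegular) (hγ : ∀ β < κ.ord, γ β < κ.ord)
    {ξ : Ordinal.{u}} (hξ : ξ < κ.ord) : closureChain γ ξ < κ.ord := by
  induction ξ using WellFoundedLT.induction with | ind ξ IH
  rw [closureChain]
  apply Ordinal.lift_iSup_lt_of_lt_cof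
  · rwa [← lift_cof, hκ.cof_ord, Cardinal.mk_Iio_ordinal, Cardinal.lift_lift, Cardinal.lift_lt,
      ← lt_ord]
  · rintro ⟨η, hη⟩
    have h := IH η hη (hη.trans hξ)
    exact (isSuccLimit_ord hκ.aleph0_le).add_one_lt (isPrincipal_add_ord hκ.aleph0_le h (hγ _ h))

theorem exists_countably_closed (hκ : κ.IsRegular) (hκ₁ : ℵ₁ < κ)
    (hγ : ∀ β < κ.ord, γ β < κ.ord) :
    ∃ δ < κ.ord, ∀ s : Set Ordinal.{u}, s.Countable → s ⊆ Iio δ →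
      ∃ β < δ, s ⊆ Iio β ∧ γ β < δ := by
  refine ⟨closureChain γ ω₁, closureChain_lt_ord hκ hγ ?_, fun s hs hsδ => ?_⟩
  · rwa [← ord_aleph, ord_lt_ord]
  have hbelow : ∀ o : s, ∃ ξ < ω₁, o.1 < closureChain γ ξ := by
    rintro ⟨o, ho⟩
    have h := hsδ ho
    rw [mem_Iio, closureChain, Ordinal.lt_iSup_iff] at h
    obtain ⟨⟨η, hη⟩, h⟩ := h
    exact ⟨η + 1, (isSuccLimit_omega 1).add_one_lt hη,
      (Order.lt_add_one_iff.1 h).trans_lt (add_lt_closureChain (lt_add_one η))⟩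
  choose ξ hξω hξ using hbelow
  have : Countable s := hs.to_subtype
  have hsup : ⨆ o, ξ o < ω₁ := Ordinal.iSup_lt_omega_one hξω
  refine ⟨closureChain γ (⨆ o, ξ o), closureChain_strictMono hsup, fun o ho => ?_,
    apply_closureChain_lt hsup⟩
  exact (hξ ⟨o, ho⟩).trans_le
    (closureChain_strictMono.monotone (Ordinal.le_iSup ξ ⟨o, ho⟩))

/-- A weak form of Fodor's lemma for the regressive map `i ↦ sup (b i ∩ Iio i)`. -/
theorem exists_unbounded_inter_Iio_subset (hκ : κ.IsRegular) (hκ₁ : ℵ₁ < κ)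
    (b : Ordinal.{u} → Set Ordinal.{u}) (hb : ∀ i, (b i).Countable) :
    ∃ β < κ.ord, ∀ α < κ.ord, ∃ i, b i ∩ Iio i ⊆ Iio β ∧ α ≤ i ∧ i < κ.ord := by
  by_contra! h
  have hbound : ∀ β, ∃ α, β < κ.ord →
      α < κ.ord ∧ ∀ i, b i ∩ Iio i ⊆ Iio β → α ≤ i → κ.ord ≤ i := by
    intro β
    by_cases hβ : β < κ.ord
    · obtain ⟨α, hα, hbad⟩ := h β hβ
      exact ⟨α, fun _ => ⟨hα, hbad⟩⟩
    · exact ⟨0, fun h => absurd h hβ⟩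
  choose γ hγ using hbound
  obtain ⟨δ, hδ, hclosed⟩ := exists_countably_closed hκ hκ₁ fun β hβ => (hγ β hβ).1
  obtain ⟨β, hβδ, hsub, hγδ⟩ :=
    hclosed (b δ ∩ Iio δ) ((hb δ).mono inter_subset_left) inter_subset_right
  exact ((hγ β (hβδ.trans hδ)).2 δ hsub hγδ.le).not_gt hδ

theorem exists_lt_eq_of_unbounded (hκ : κ.IsRegular) {S : Set Ordinal.{u}}
    (hS : ∀ α < κ.ord, ∃ i ∈ S, α ≤ i ∧ i < κ.ord) {Z : Type u} (hZ : #Z < κ)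
    (τ : Ordinal.{u} → Z) :
    ∃ i ∈ S, ∃ j ∈ S, i < j ∧ j < κ.ord ∧ τ i = τ j := by
  by_contra! h
  set S' := S ∩ Iio κ.ord
  have hinj : Function.Injective (fun i : S' => τ i) := by
    rintro ⟨i, hiS, hi⟩ ⟨j, hjS, hj⟩ hij
    simp only at hij
    rcases lt_trichotomy i j with hlt | rfl | hlt
    · exact absurd hij (h i hiS j hjS hlt hj)
    · rfl
    · exact absurd hij.symm (h j hjS i hiS hlt hi)
  have hsup : ⨆ i : S', (i.1 + 1) < κ.ord := by
    apply Ordinal.lift_iSup_lt_of_lt_cof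
    · rw [← lift_cof, hκ.cof_ord]
      exact (lift_mk_le_lift_mk_of_injective hinj).trans_lt (Cardinal.lift_lt.2 hZ)
    · exact fun i => (isSuccLimit_ord hκ.aleph0_le).add_one_lt i.2.2
  obtain ⟨i, hiS, hle, hi⟩ := hS _ hsup
  exact (lt_add_one i).not_ge ((Ordinal.le_iSup (fun i : S' => i.1 + 1) ⟨i, hiS, hi⟩).trans hle)

theorem exists_lt_eqOn_inter (hκ : κ.IsRegular) (hκ₁ : ℵ₁ < κ) (hpow : ∀ μ < κ, μ ^ ℵ₀ < κ)
    {U X Y : Type u} (hX : #X < κ) (hY : #Y < κ) (D : Ordinal.{u} → Set U)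
    (hD : ∀ i, (D i).Countable) (F : Ordinal.{u} → U → X) (c : Ordinal.{u} → Y) :
    ∃ i j, i < j ∧ j < κ.ord ∧ c i = c j ∧ EqOn (F i) (F j) (D i ∩ D j) := by
  have hκ₀ : ℵ₀ < κ := aleph0_lt_aleph_one.trans hκ₁
  set rank : U → Ordinal.{u} := fun u => sInf {i | u ∈ D i}
  obtain ⟨β, hβ, hS⟩ := exists_unbounded_inter_Iio_subset hκ hκ₁ (fun i => rank '' D i)
    fun i => (hD i).image rank
  set W := ⋃ i < β, D i
  have hW : #W < κ := by
    refine (mk_biUnion_le_of_le (le_max_left _ _) (le_max_right _ _) D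
      fun i _ => (hD i).le_aleph0.trans (le_max_right _ _)).trans_lt (max_lt ?_ hκ₀)
    rwa [← lt_ord]
  let graph (i : Ordinal.{u}) : Set (W × X) := (fun w : W => (w, F i w)) '' {w | ↑w ∈ D i}
  have hgraph (i : Ordinal.{u}) : #(graph i) ≤ ℵ₀ :=
    (((hD i).preimage Subtype.val_injective).image _).le_aleph0
  have hZ : #({t : Set (W × X) // #t ≤ ℵ₀} × Y) < κ := by
    rw [mk_prod, Cardinal.lift_id, Cardinal.lift_id]
    refine mul_lt_of_lt hκ₀.le ((mk_bounded_set_le _ _).trans_lt (hpow _ ?_)) hY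
    rw [mk_prod, Cardinal.lift_id, Cardinal.lift_id]
    exact max_lt (mul_lt_of_lt hκ₀.le hW hX) hκ₀
  obtain ⟨i, hi, j, hj, hij, hjκ, hτ⟩ :=
    exists_lt_eq_of_unbounded hκ hS hZ fun i => (⟨graph i, hgraph i⟩, c i)
  refine ⟨i, j, hij, hjκ, congrArg Prod.snd hτ, fun u hu => ?_⟩
  have hrank : rank u < j := (csInf_le' (s := {i | u ∈ D i}) hu.1).trans_lt hij
  have huW : u ∈ W :=
    mem_biUnion (hj ⟨⟨u, hu.2, rfl⟩, hrank⟩) (csInf_mem (s := {i | u ∈ D i}) ⟨j, hu.2⟩)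
  have hgraph_eq : graph i = graph j := congrArg (fun τ => τ.1.1) hτ
  have hmem : (⟨u, huW⟩, F i u) ∈ graph j := hgraph_eq ▸ ⟨⟨u, huW⟩, hu.1, rfl⟩
  obtain ⟨w, hw, hweq⟩ := hmem
  simp only [Prod.mk.injEq] at hweq
  rw [← hweq.2, hweq.1]

end Ordinal

namespace Cardinal

theorem exists_ne_eqOn_inter {κ : Cardinal.{u}} (hκ : κ.IsRegular) (hκ₁ : ℵ₁ < κ)
    (hpow : ∀ μ < κ, μ ^ ℵ₀ < κ) {J U X Y : Type u} (hJ : κ ≤ #J) (hX : #X < κ) (hY : #Y < κ)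
    (D : J → Set U) (hD : ∀ j, (D j).Countable) (F : J → U → X) (c : J → Y) :
    ∃ i j, i ≠ j ∧ c i = c j ∧ EqOn (F i) (F j) (D i ∩ D j) := by
  obtain ⟨f⟩ : Nonempty (Iio κ.ord ↪ J) := by
    rw [← Cardinal.lift_mk_le'.{u + 1, u}, mk_Iio_ordinal, card_ord]
    simpa using hJ
  have hκ₀ : (0 : Ordinal) < κ.ord := ord_pos.2 (aleph0_pos.trans_le hκ.aleph0_le)
  let e (i : Ordinal.{u}) : J := if h : i < κ.ord then f ⟨i, h⟩ else f ⟨0, hκ₀⟩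
  obtain ⟨i, j, hij, hj, hc, hF⟩ := Ordinal.exists_lt_eqOn_inter hκ hκ₁ hpow hX hY (D ∘ e)
    (fun i => hD (e i)) (F ∘ e) (c ∘ e)
  refine ⟨e i, e j, fun h => hij.ne ?_, hc, hF⟩
  have hf : f ⟨i, hij.trans hj⟩ = f ⟨j, hj⟩ := by simpa [e, hij.trans hj, hj] using h
  exact congrArg Subtype.val (f.injective hf)

theorem two_power_aleph0_eq_aleph_one_lift (h : (2 : Cardinal.{v}) ^ ℵ₀ = ℵ₁) :
    (2 : Cardinal.{u}) ^ ℵ₀ = ℵ₁ :=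
  Cardinal.lift_injective.{v, u} (by simpa using congrArg Cardinal.lift.{u} h)

theorem aleph_one_power_aleph0 (hCH : (2 : Cardinal.{u}) ^ ℵ₀ = ℵ₁) :
    (ℵ₁ : Cardinal.{u}) ^ ℵ₀ = ℵ₁ := by
  rw [← hCH, ← power_mul, aleph0_mul_aleph0]

theorem aleph_two_eq_succ_aleph_one : (ℵ_ 2 : Cardinal.{u}) = Order.succ ℵ₁ := by
  rw [succ_aleph, one_add_one_eq_two]

theorem exists_ne_eqOn_inter_of_CH (hCH : (2 : Cardinal.{u}) ^ ℵ₀ = ℵ₁) {J U X Y : Type u}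
    (hJ : ℵ_ 2 ≤ #J) (hX : #X ≤ ℵ₁) (hY : #Y ≤ ℵ₁) (D : J → Set U) (hD : ∀ j, (D j).Countable)
    (F : J → U → X) (c : J → Y) :
    ∃ i j, i ≠ j ∧ c i = c j ∧ EqOn (F i) (F j) (D i ∩ D j) := by
  have h₁₂ : (ℵ₁ : Cardinal.{u}) < ℵ_ 2 := aleph_lt_aleph.2 (by norm_num)
  refine exists_ne_eqOn_inter (aleph_two_eq_succ_aleph_one ▸ isRegular_succ (aleph0_le_aleph 1))
    h₁₂ (fun μ hμ => ?_) hJ (hX.trans_lt h₁₂) (hY.trans_lt h₁₂) D hD F c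
  rw [aleph_two_eq_succ_aleph_one, Order.lt_succ_iff] at hμ
  exact ((power_le_power_right hμ).trans_eq (aleph_one_power_aleph0 hCH)).trans_lt h₁₂

end Cardinal

/-- Assuming CH, the poset `P` is `ℵ₂`-cc: every antichain has size at most `ℵ₁`. -/
theorem stmt8 (G : GrowthPair) {ι : Type} (C : IdxCtx ι)
    (hCH : (2 : Cardinal) ^ Cardinal.aleph0 = Cardinal.aleph 1)
    (A : Set (Cond ι)) (hA : ∀ p ∈ A, InP G C p)
    (hanti : ∀ p ∈ A, ∀ q ∈ A, p ≠ q →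
      ¬ ∃ r : Cond ι, InP G C r ∧ CondLE C r p ∧ CondLE C r q) :
    Cardinal.mk A ≤ Cardinal.aleph 1 := by
  have hCH₀ : (2 : Cardinal.{0}) ^ ℵ₀ = ℵ₁ := two_power_aleph0_eq_aleph_one_lift hCH
  have hsets : #(Set (List ℕ)) = ℵ₁ := by rw [mk_set, mk_list_eq_aleph0, hCH₀]
  have hdata : #(Set (List ℕ) × (List ℕ → Set (List ℕ))) ≤ ℵ₁ := by
    rw [mk_prod, ← power_def, mk_list_eq_aleph0, Cardinal.lift_id, Cardinal.lift_id, hsets,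
      aleph_one_power_aleph0 hCH₀, mul_eq_self (aleph0_le_aleph 1)]
  by_contra! hlarge
  obtain ⟨⟨p, hp⟩, ⟨q, hq⟩, hpq, hstems, hagree⟩ := exists_ne_eqOn_inter_of_CH hCH₀
    (aleph_two_eq_succ_aleph_one ▸ Order.succ_le_of_lt hlarge) hdata hsets.le
    (fun p : A => p.1.dom) (fun p => (hA p.1 p.2).1) (fun p ε => (p.1.sacks ε, p.1.tr ε))
    (fun p => Cond.stemSet C p.1)
  have hsacks : EqOn p.sacks q.sacks (p.dom ∩ q.dom) := fun _ h => congrArg Prod.fst (hagree h)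
  have htr : EqOn p.tr q.tr (p.dom ∩ q.dom) := fun _ h => congrArg Prod.snd (hagree h)
  exact hanti p hp q hq (fun h => hpq (Subtype.ext h)) ⟨Cond.amalg C p q,
    Cond.inP_amalg (hA p hp) (hA q hq) hsacks hstems, Cond.amalg_le_left,
    Cond.amalg_le_right hsacks htr⟩
end
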